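/- arXiv:1608.07964 — 3 statements merged into one kernel-verified Lean document; each statement's English description precedes it below -/
import Mathlib

section
/- The 2-dimensional vector space with basis {e₁, e₂} and trilinear product μ defined by μ(e₁,e₁,e₁)=e₁, μ(e₂,e₂,e₁)=e₁+e₂, μ(e₁,e₁,e₂)=e₂, μ(e₂,e₂,e₂)=e₁+2e₂, μ(e₁,e₂,e₁)=e₂, μ(e₁,e₂,e₂)=e₁+e₂, μ(e₂,e₁,e₁)=e₂, μ(e₂,e₁,e₂)=e₁+e₂ is a totally associative 3-ary algebra. -/
set_option maxHeartbeats 4000000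

noncomputable def e₁ : Fin 2 → ℚ := ![1, 0]
noncomputable def e₂ : Fin 2 → ℚ := ![0, 1]

lemma decomp (x : Fin 2 → ℚ) : x = x 0 • e₁ + x 1 • e₂ := by
  funext i; fin_cases i <;> simp [e₁, e₂]

/-- the trilinear product on the 2-dimensional space given by the table
is a totally associative 3-ary algebra. -/
theorem stmt0
    (μ : (Fin 2 → ℚ) →ₗ[ℚ] (Fin 2 → ℚ) →ₗ[ℚ] (Fin 2 → ℚ) →ₗ[ℚ] (Fin 2 → ℚ))
    (h1 : μ e₁ e₁ e₁ = e₁) (h2 : μ e₂ e₂ e₁ = e₁ + e₂)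
    (h3 : μ e₁ e₁ e₂ = e₂) (h4 : μ e₂ e₂ e₂ = e₁ + (2 : ℚ) • e₂)
    (h5 : μ e₁ e₂ e₁ = e₂) (h6 : μ e₁ e₂ e₂ = e₁ + e₂)
    (h7 : μ e₂ e₁ e₁ = e₂) (h8 : μ e₂ e₁ e₂ = e₁ + e₂) :
    ∀ x₁ x₂ x₃ x₄ x₅ : Fin 2 → ℚ,
      μ (μ x₁ x₂ x₃) x₄ x₅ = μ x₁ (μ x₂ x₃ x₄) x₅ ∧
      μ x₁ (μ x₂ x₃ x₄) x₅ = μ x₁ x₂ (μ x₃ x₄ x₅) := by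
  intro x₁ x₂ x₃ x₄ x₅
  rw [decomp x₁, decomp x₂, decomp x₃, decomp x₄, decomp x₅]
  simp only [map_add, map_smul, LinearMap.add_apply, LinearMap.smul_apply,
    h1, h2, h3, h4, h5, h6, h7, h8, smul_add, smul_smul]
  constructor <;> module
end

section
/- Let (A, μ) be a totally associative 3-ary algebra and V a vector space with linear maps L: A⊗A → End(V), M: A⊗A → End(V), R: A⊗A → End(V). Then the product τ on A ⊕ V defined by τ(x+a, y+b, z+c) = μ(x,y,z) + L(x,y)(c) + M(x,z)(b) + R(y,z)(a) makes A ⊕ V into a totally associative 3-ary algebra if and only if (L, M, R, V) satisfies the trimodule compatibility conditions: (1) L(a,b)L(c,d) = L(μ(a,b,c),d) = L(a,μ(b,c,d)); (2) R(c,d)R(a,b) = R(a,μ(b,c,d)) = R(μ(a,b,c),d); (3) M(a,d)L(b,c) = L(a,b)M(c,d) = M(μ(a,b,c),d); (4) M(a,d)R(b,c) = R(c,d)M(a,b) = M(a,μ(b,c,d)); (5) R(c,d)L(a,b) = L(a,b)R(c,d) = M(a,d)M(b,c), for all a,b,c,d ∈ A. -/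
/-- The semidirect-sum triple product on `A × V`. -/
noncomputable def semiTriProd {K A V : Type*} [Field K] [AddCommGroup A] [Module K A]
    [AddCommGroup V] [Module K V]
    (μ : A →ₗ[K] A →ₗ[K] A →ₗ[K] A)
    (L M R : A →ₗ[K] A →ₗ[K] Module.End K V) :
    A × V → A × V → A × V → A × V :=
  fun p q r => (μ p.1 q.1 r.1, L p.1 q.1 r.2 + M p.1 r.1 q.2 + R q.1 r.1 p.2)

/-- for a totally associative 3-ary algebra (A, μ), the semidirect product
on A ⊕ V is totally associative iff (L, M, R, V) satisfies the trimodule conditions. -/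
theorem stmt11 {K A V : Type*} [Field K] [AddCommGroup A] [Module K A]
    [AddCommGroup V] [Module K V]
    (μ : A →ₗ[K] A →ₗ[K] A →ₗ[K] A)
    (hμ : ∀ x y z u v : A,
      μ (μ x y z) u v = μ x (μ y z u) v ∧ μ x (μ y z u) v = μ x y (μ z u v))
    (L M R : A →ₗ[K] A →ₗ[K] Module.End K V) :
    (∀ p₁ p₂ p₃ p₄ p₅ : A × V,
      semiTriProd μ L M R (semiTriProd μ L M R p₁ p₂ p₃) p₄ p₅
          = semiTriProd μ L M R p₁ (semiTriProd μ L M R p₂ p₃ p₄) p₅ ∧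
      semiTriProd μ L M R p₁ (semiTriProd μ L M R p₂ p₃ p₄) p₅
          = semiTriProd μ L M R p₁ p₂ (semiTriProd μ L M R p₃ p₄ p₅)) ↔
    (∀ a b c d : A,
      (L a b ∘ₗ L c d = L (μ a b c) d ∧ L (μ a b c) d = L a (μ b c d)) ∧
      (R c d ∘ₗ R a b = R a (μ b c d) ∧ R a (μ b c d) = R (μ a b c) d) ∧
      (M a d ∘ₗ L b c = L a b ∘ₗ M c d ∧ L a b ∘ₗ M c d = M (μ a b c) d) ∧
      (M a d ∘ₗ R b c = R c d ∘ₗ M a b ∧ R c d ∘ₗ M a b = M a (μ b c d)) ∧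
      (R c d ∘ₗ L a b = L a b ∘ₗ R c d ∧ L a b ∘ₗ R c d = M a d ∘ₗ M b c)) := by
  constructor
  · intro h a b c d
    have h5 := fun v : V => h (a,0) (b,0) (c,0) (d,0) (0,v)
    have h4 := fun v : V => h (a,0) (b,0) (c,0) (0,v) (d,0)
    have h3 := fun v : V => h (a,0) (b,0) (0,v) (c,0) (d,0)
    have h2 := fun v : V => h (a,0) (0,v) (b,0) (c,0) (d,0)
    have h1 := fun v : V => h (0,v) (a,0) (b,0) (c,0) (d,0)
    simp only [semiTriProd, Prod.mk.injEq, map_zero, LinearMap.zero_apply, zero_add,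
      add_zero, LinearMap.map_zero] at h1 h2 h3 h4 h5
    refine ⟨⟨?_, ?_⟩, ⟨?_, ?_⟩, ⟨?_, ?_⟩, ⟨?_, ?_⟩, ⟨?_, ?_⟩⟩ <;>
      ext v <;> (try simp only [LinearMap.comp_apply])
    · exact ((h5 v).1.2.trans (h5 v).2.2).symm
    · exact (h5 v).1.2
    · exact (h1 v).1.2.trans (h1 v).2.2
    · exact (h1 v).2.2.symm
    · exact (h4 v).2.2
    · exact ((h4 v).1.2.trans (h4 v).2.2).symm
    · exact (h2 v).1.2.symm
    · exact (h2 v).1.2.trans (h2 v).2.2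
    · exact (h3 v).1.2.trans (h3 v).2.2
    · exact (h3 v).2.2.symm
  · intro h p₁ p₂ p₃ p₄ p₅
    obtain ⟨x₁, v₁⟩ := p₁; obtain ⟨x₂, v₂⟩ := p₂; obtain ⟨x₃, v₃⟩ := p₃
    obtain ⟨x₄, v₄⟩ := p₄; obtain ⟨x₅, v₅⟩ := p₅
    have hLL : ∀ (a b c d : A) (v : V), L a b (L c d v) = L (μ a b c) d v :=
      fun a b c d v => LinearMap.congr_fun (h a b c d).1.1 v
    have hL2 : ∀ (a b c d : A), L (μ a b c) d = L a (μ b c d) :=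
      fun a b c d => (h a b c d).1.2
    have hRR : ∀ (a b c d : A) (v : V), R c d (R a b v) = R a (μ b c d) v :=
      fun a b c d v => LinearMap.congr_fun (h a b c d).2.1.1 v
    have hR2 : ∀ (a b c d : A), R a (μ b c d) = R (μ a b c) d :=
      fun a b c d => (h a b c d).2.1.2
    have hML : ∀ (a b c d : A) (v : V), M a d (L b c v) = L a b (M c d v) :=
      fun a b c d v => LinearMap.congr_fun (h a b c d).2.2.1.1 v
    have hLM : ∀ (a b c d : A) (v : V), L a b (M c d v) = M (μ a b c) d v :=
      fun a b c d v => LinearMap.congr_fun (h a b c d).2.2.1.2 v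
    have hMR : ∀ (a b c d : A) (v : V), M a d (R b c v) = R c d (M a b v) :=
      fun a b c d v => LinearMap.congr_fun (h a b c d).2.2.2.1.1 v
    have hRM : ∀ (a b c d : A) (v : V), R c d (M a b v) = M a (μ b c d) v :=
      fun a b c d v => LinearMap.congr_fun (h a b c d).2.2.2.1.2 v
    have hRL : ∀ (a b c d : A) (v : V), R c d (L a b v) = L a b (R c d v) :=
      fun a b c d v => LinearMap.congr_fun (h a b c d).2.2.2.2.1 v
    have hLR : ∀ (a b c d : A) (v : V), L a b (R c d v) = M a d (M b c v) :=
      fun a b c d v => LinearMap.congr_fun (h a b c d).2.2.2.2.2 v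
    constructor
    · refine Prod.ext (hμ x₁ x₂ x₃ x₄ x₅).1 ?_
      simp only [semiTriProd, map_add]
      rw [hL2 x₁ x₂ x₃ x₄]
      rw [show M (μ x₁ x₂ x₃) x₅ v₄ = M x₁ x₅ (L x₂ x₃ v₄) from
        ((hML x₁ x₂ x₃ x₅ v₄).trans (hLM x₁ x₂ x₃ x₅ v₄)).symm]
      rw [show R x₄ x₅ (L x₁ x₂ v₃) = M x₁ x₅ (M x₂ x₄ v₃) from
        (hRL x₁ x₂ x₄ x₅ v₃).trans (hLR x₁ x₂ x₄ x₅ v₃)]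
      rw [show R x₄ x₅ (M x₁ x₃ v₂) = M x₁ x₅ (R x₃ x₄ v₂) from
        (hMR x₁ x₃ x₄ x₅ v₂).symm]
      rw [show R x₄ x₅ (R x₂ x₃ v₁) = R (μ x₂ x₃ x₄) x₅ v₁ from
        (hRR x₂ x₃ x₄ x₅ v₁).trans (congrFun (congrArg _ (hR2 x₂ x₃ x₄ x₅)) v₁)]
      abel
    · refine Prod.ext (hμ x₁ x₂ x₃ x₄ x₅).2 ?_
      simp only [semiTriProd, map_add]
      rw [show L x₁ (μ x₂ x₃ x₄) v₅ = L x₁ x₂ (L x₃ x₄ v₅) from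
        ((hLL x₁ x₂ x₃ x₄ v₅).trans (congrFun (congrArg _ (hL2 x₁ x₂ x₃ x₄)) v₅)).symm]
      rw [show M x₁ x₅ (L x₂ x₃ v₄) = L x₁ x₂ (M x₃ x₅ v₄) from hML x₁ x₂ x₃ x₅ v₄]
      rw [show M x₁ x₅ (M x₂ x₄ v₃) = L x₁ x₂ (R x₄ x₅ v₃) from (hLR x₁ x₂ x₄ x₅ v₃).symm]
      rw [show M x₁ x₅ (R x₃ x₄ v₂) = M x₁ (μ x₃ x₄ x₅) v₂ from
        (hMR x₁ x₃ x₄ x₅ v₂).trans (hRM x₁ x₃ x₄ x₅ v₂)]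
      rw [show R (μ x₂ x₃ x₄) x₅ v₁ = R x₂ (μ x₃ x₄ x₅) v₁ from
        (congrFun (congrArg _ (hR2 x₂ x₃ x₄ x₅)) v₁).symm]
      abel
end

section
/- Let (A, μ) be a partially associative 3-ary algebra and V a vector space with linear maps L, M, R: A⊗A → End(V). Then the product τ on A ⊕ V defined by τ(x+a, y+b, z+c) = μ(x,y,z) + L(x,y)(c) + M(x,z)(b) + R(y,z)(a) makes A ⊕ V into a partially associative 3-ary algebra if and only if for all a,b,c,d ∈ A: (1) L(a,b)L(c,d) + L(μ(a,b,c),d) + L(a,μ(b,c,d)) = 0; (2) R(c,d)R(a,b) + R(a,μ(b,c,d)) + R(μ(a,b,c),d) = 0; (3) M(a,d)L(b,c) + L(a,b)M(c,d) + M(μ(a,b,c),d) = 0; (4) M(a,d)R(b,c) + R(c,d)M(a,b) + M(a,μ(b,c,d)) = 0; (5) R(c,d)L(a,b) + L(a,b)R(c,d) + M(a,d)M(b,c) = 0. -/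
/-- for a partially associative 3-ary algebra (A, μ), the semidirect product
on A ⊕ V is partially associative iff (L, M, R, V) satisfies the trimodule conditions. -/
theorem stmt12 {K A V : Type*} [Field K] [AddCommGroup A] [Module K A]
    [AddCommGroup V] [Module K V]
    (μ : A →ₗ[K] A →ₗ[K] A →ₗ[K] A)
    (hμ : ∀ x y z u v : A,
      μ (μ x y z) u v + μ x (μ y z u) v + μ x y (μ z u v) = 0)
    (L M R : A →ₗ[K] A →ₗ[K] Module.End K V) :
    (∀ p₁ p₂ p₃ p₄ p₅ : A × V,
      semiTriProd μ L M R (semiTriProd μ L M R p₁ p₂ p₃) p₄ p₅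
        + semiTriProd μ L M R p₁ (semiTriProd μ L M R p₂ p₃ p₄) p₅
        + semiTriProd μ L M R p₁ p₂ (semiTriProd μ L M R p₃ p₄ p₅) = 0) ↔
    (∀ a b c d : A,
      (L a b ∘ₗ L c d + L (μ a b c) d + L a (μ b c d) = 0) ∧
      (R c d ∘ₗ R a b + R a (μ b c d) + R (μ a b c) d = 0) ∧
      (M a d ∘ₗ L b c + L a b ∘ₗ M c d + M (μ a b c) d = 0) ∧
      (M a d ∘ₗ R b c + R c d ∘ₗ M a b + M a (μ b c d) = 0) ∧
      (R c d ∘ₗ L a b + L a b ∘ₗ R c d + M a d ∘ₗ M b c = 0)) := by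
  constructor
  · intro h a b c d
    have key : ∀ q₁ q₂ q₃ q₄ q₅ : A × V,
        (semiTriProd μ L M R (semiTriProd μ L M R q₁ q₂ q₃) q₄ q₅).2
          + (semiTriProd μ L M R q₁ (semiTriProd μ L M R q₂ q₃ q₄) q₅).2
          + (semiTriProd μ L M R q₁ q₂ (semiTriProd μ L M R q₃ q₄ q₅)).2 = 0 := by
      intro q₁ q₂ q₃ q₄ q₅
      have := congrArg Prod.snd (h q₁ q₂ q₃ q₄ q₅)
      simpa [Prod.snd_add] using this
    refine ⟨LinearMap.ext fun v => ?_, LinearMap.ext fun v => ?_, LinearMap.ext fun v => ?_,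
      LinearMap.ext fun v => ?_, LinearMap.ext fun v => ?_⟩ <;>
      simp only [LinearMap.add_apply, LinearMap.comp_apply, LinearMap.zero_apply]
    · have := key (a,0) (b,0) (c,0) (d,0) (0,v)
      simp only [semiTriProd, map_zero, LinearMap.zero_apply, zero_add, add_zero,
        LinearMap.map_zero] at this
      linear_combination (norm := abel) this
    · have := key (0,v) (a,0) (b,0) (c,0) (d,0)
      simp only [semiTriProd, map_zero, LinearMap.zero_apply, zero_add, add_zero,
        LinearMap.map_zero] at this
      linear_combination (norm := abel) this
    · have := key (a,0) (b,0) (c,0) (0,v) (d,0)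
      simp only [semiTriProd, map_zero, LinearMap.zero_apply, zero_add, add_zero,
        LinearMap.map_zero] at this
      linear_combination (norm := abel) this
    · have := key (a,0) (0,v) (b,0) (c,0) (d,0)
      simp only [semiTriProd, map_zero, LinearMap.zero_apply, zero_add, add_zero,
        LinearMap.map_zero] at this
      linear_combination (norm := abel) this
    · have := key (a,0) (b,0) (0,v) (c,0) (d,0)
      simp only [semiTriProd, map_zero, LinearMap.zero_apply, zero_add, add_zero,
        LinearMap.map_zero] at this
      linear_combination (norm := abel) this
  · rintro h ⟨x₁,v₁⟩ ⟨x₂,v₂⟩ ⟨x₃,v₃⟩ ⟨x₄,v₄⟩ ⟨x₅,v₅⟩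
    have e1 := LinearMap.congr_fun (h x₁ x₂ x₃ x₄).1 v₅
    have e2 := LinearMap.congr_fun (h x₂ x₃ x₄ x₅).2.1 v₁
    have e3 := LinearMap.congr_fun (h x₁ x₂ x₃ x₅).2.2.1 v₄
    have e4 := LinearMap.congr_fun (h x₁ x₃ x₄ x₅).2.2.2.1 v₂
    have e5 := LinearMap.congr_fun (h x₁ x₂ x₄ x₅).2.2.2.2 v₃
    simp only [LinearMap.add_apply, LinearMap.comp_apply,
      LinearMap.zero_apply] at e1 e2 e3 e4 e5
    refine Prod.ext ?_ ?_
    · simpa [semiTriProd] using hμ x₁ x₂ x₃ x₄ x₅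
    · simp only [semiTriProd, map_add, Prod.snd_zero, Prod.snd_add]
      linear_combination (norm := abel) e1 + e2 + e3 + e4 + e5
end
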